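/- arXiv:2303.06297 — 8 statements merged into one kernel-verified Lean document; each statement's English description precedes it below -/
import Mathlib

section
/- For the complete graph K_n with n ≥ 3 and adjacency transition matrix U(t) = exp(itA), the diagonal entry satisfies |U(t)_{u,u}| = |n - 1 + e^{itn}|/n ≥ 1 - 2/n for all real t, for every vertex u. -/
/-!
`A = J - I` has the spectral decomposition `A = (n - 1) • P + (-1) • (1 - P)` with `P = J / n`
idempotent. For complementary idempotents the powers of `z • P + w • (1 - P)` are
`z ^ k • P + w ^ k • (1 - P)`, so the exponential series splits into two scalar exponential
series. This gives `U(t)_{u,u} = e^{-it} (n - 1 + e^{itn}) / n`, and the lower bound comes from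
`|n - 1 + e^{itn}| ≥ Re (n - 1 + e^{itn}) ≥ n - 2`.
-/

open Complex Matrix

namespace IsIdempotentElem

variable {𝕂 𝔸 : Type*} [RCLike 𝕂] [Ring 𝔸] [Algebra 𝕂 𝔸] {P : 𝔸}

theorem smul_add_smul_one_sub_pow (hP : IsIdempotentElem P) (z w : 𝕂) (k : ℕ) :
    (z • P + w • (1 - P)) ^ k = z ^ k • P + w ^ k • (1 - P) := by
  induction k with
  | zero => simp
  | succ k ih =>
    have hPQ : P * (1 - P) = 0 := by rw [mul_sub, mul_one, hP.eq, sub_self]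
    have hQP : (1 - P) * P = 0 := by rw [sub_mul, one_mul, hP.eq, sub_self]
    rw [pow_succ, ih, add_mul, mul_add, mul_add, smul_mul_smul, smul_mul_smul, smul_mul_smul,
      smul_mul_smul, hP.eq, hP.one_sub.eq, hPQ, hQP, pow_succ, pow_succ]
    simp

theorem exp_smul_add_smul_one_sub [TopologicalSpace 𝔸] [IsTopologicalRing 𝔸] [T2Space 𝔸]
    [ContinuousSMul 𝕂 𝔸] (hP : IsIdempotentElem P) (z w : 𝕂) :
    NormedSpace.exp (z • P + w • (1 - P)) =
      NormedSpace.exp z • P + NormedSpace.exp w • (1 - P) := by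
  rw [NormedSpace.exp_eq_tsum 𝕂 (𝔸 := 𝔸)]
  refine HasSum.tsum_eq ?_
  have hterm : ∀ k : ℕ, ((k.factorial : 𝕂)⁻¹) • (z • P + w • (1 - P)) ^ k =
      ((k.factorial : 𝕂)⁻¹ • z ^ k) • P + ((k.factorial : 𝕂)⁻¹ • w ^ k) • (1 - P) := fun k => by
    rw [hP.smul_add_smul_one_sub_pow, smul_add, smul_smul, smul_smul, smul_eq_mul, smul_eq_mul]
  simp only [hterm]
  exact ((NormedSpace.exp_series_hasSum_exp' z).smul_const P).add
    ((NormedSpace.exp_series_hasSum_exp' w).smul_const _)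

end IsIdempotentElem

namespace Matrix

variable (m 𝕂 : Type*) [Fintype m] [Field 𝕂]

def averaging : Matrix m m 𝕂 := (Fintype.card m : 𝕂)⁻¹ • of fun _ _ => 1

variable {m 𝕂}

theorem isIdempotentElem_averaging [CharZero 𝕂] [Nonempty m] :
    IsIdempotentElem (averaging m 𝕂) := by
  have hcard : (Fintype.card m : 𝕂) ≠ 0 := by simp
  ext i j
  simp [averaging, mul_apply]

theorem of_ite_zero_one_eq [DecidableEq m] [CharZero 𝕂] [Nonempty m] :
    (of fun i j : m => if i = j then (0 : 𝕂) else 1) =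
      ((Fintype.card m : 𝕂) - 1) • averaging m 𝕂 + (-1 : 𝕂) • (1 - averaging m 𝕂) := by
  have hcard : (Fintype.card m : 𝕂) ≠ 0 := by simp
  ext i j
  by_cases h : i = j <;> simp [averaging, h] <;> field_simp <;> ring

theorem exp_smul_of_ite_zero_one_apply_self [DecidableEq m] [Nonempty m] (z : ℂ) (u : m) :
    NormedSpace.exp (z • of fun i j : m => if i = j then (0 : ℂ) else 1) u u =
      Complex.exp (-z) * ((Fintype.card m - 1 + Complex.exp (z * Fintype.card m)) /
        Fintype.card m) := by
  have hcard : (Fintype.card m : ℂ) ≠ 0 := by simp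
  rw [of_ite_zero_one_eq, smul_add, smul_smul, smul_smul,
    isIdempotentElem_averaging.exp_smul_add_smul_one_sub, ← Complex.exp_eq_exp_ℂ]
  simp only [averaging, smul_of, mul_neg, mul_one, add_apply, of_apply, Pi.smul_apply,
    smul_eq_mul, smul_apply, sub_apply, one_apply_eq]
  rw [show z * (Fintype.card m - 1) = -z + z * Fintype.card m by ring, Complex.exp_add]
  field_simp
  ring

end Matrix

theorem stmt_0_general (n : ℕ)
    (A : Matrix (Fin n) (Fin n) ℂ)
    (hA : A = Matrix.of fun i j => if i = j then 0 else 1)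
    (t : ℝ) (u : Fin n) :
    ‖(NormedSpace.exp ((Complex.I * t) • A)) u u‖
        = ‖(n : ℂ) - 1 + Complex.exp (Complex.I * t * n)‖ / n ∧
    1 - 2 / (n : ℝ) ≤
      ‖(NormedSpace.exp ((Complex.I * t) • A)) u u‖ := by
  have : Nonempty (Fin n) := ⟨u⟩
  have hn : (0 : ℝ) < n := Nat.cast_pos.2 u.pos
  have hdiag : ‖(NormedSpace.exp ((Complex.I * t) • A)) u u‖
      = ‖(n : ℂ) - 1 + Complex.exp (Complex.I * t * n)‖ / n := by
    rw [hA, Matrix.exp_smul_of_ite_zero_one_apply_self, norm_mul, norm_div, Fintype.card_fin,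
      Complex.norm_exp]
    simp
  have hlower : (n : ℝ) - 2 ≤ ‖(n : ℂ) - 1 + Complex.exp (Complex.I * t * n)‖ :=
    calc (n : ℝ) - 2 ≤ ((n : ℂ) - 1 + Complex.exp (Complex.I * t * n)).re := by
          simp only [add_re, sub_re, natCast_re, one_re, exp_re, mul_re, I_re, ofReal_re,
            zero_mul, I_im, ofReal_im, mul_zero, sub_self, mul_im, one_mul, zero_add, natCast_im,
            Real.exp_zero]
          linarith [Real.neg_one_le_cos (t * n)]
      _ ≤ _ := Complex.re_le_norm _
  refine ⟨hdiag, ?_⟩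
  rw [hdiag, one_sub_div hn.ne']
  gcongr

/-- For the complete graph `K n` (`n ≥ 3`) with adjacency matrix `A = J - I` and
transition matrix `U t = exp (i t A)`, every diagonal entry satisfies
`|U(t)_{u,u}| = |n - 1 + e^{itn}| / n ≥ 1 - 2/n`. -/
theorem stmt_0 (n : ℕ) (hn : 3 ≤ n)
    (A : Matrix (Fin n) (Fin n) ℂ)
    (hA : A = Matrix.of fun i j => if i = j then 0 else 1)
    (t : ℝ) (u : Fin n) :
    ‖(NormedSpace.exp ((Complex.I * t) • A)) u u‖
        = ‖(n : ℂ) - 1 + Complex.exp (Complex.I * t * n)‖ / n ∧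
    1 - 2 / (n : ℝ) ≤
      ‖(NormedSpace.exp ((Complex.I * t) • A)) u u‖ :=
  stmt_0_general n A hA t u
end

section
/- For the complete graph K_n with n ≥ 3, equality |U(t)_{u,u}| = 1 - 2/n holds if and only if t = jπ/n for some odd integer j. -/
/-!
Writing `A = J - 1` with `J` the all-ones matrix, `J / n` is idempotent, and for an idempotent `p`
the exponential series collapses to `exp (l • p) = exp l • p + (1 - p)`. Hence
`U(t)_{u,u} = e^{-it} (n - 1 + e^{itn}) / n`, and `|n - 1 + e^{iθ}|² = (n - 2)² + 2(n - 1)(1 + cos θ)`,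
so the reverse triangle bound `n - 2` is attained exactly when `cos (tn) = -1`.
-/

open Complex Matrix

open NormedSpace in
theorem IsIdempotentElem.exp_smul {𝕂 𝔸 : Type*} [RCLike 𝕂] [Ring 𝔸] [Algebra 𝕂 𝔸]
    [TopologicalSpace 𝔸] [IsTopologicalRing 𝔸] [ContinuousSMul 𝕂 𝔸] [T2Space 𝔸]
    {p : 𝔸} (hp : IsIdempotentElem p) (l : 𝕂) :
    exp (l • p) = exp l • p + (1 - p) := by
  have hterm : ∀ k : ℕ, (k.factorial : 𝕂)⁻¹ • (l • p) ^ k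
      = ((k.factorial : 𝕂)⁻¹ • l ^ k) • p + if k = 0 then 1 - p else 0 := by
    rintro (_ | k)
    · simp
    · simp [smul_pow, hp.pow_succ_eq, smul_smul]
  rw [exp_eq_tsum 𝕂 (𝔸 := 𝔸)]
  simp only [hterm]
  exact (((exp_series_hasSum_exp' (𝕂 := 𝕂) l).smul_const p).add (hasSum_ite_eq 0 (1 - p))).tsum_eq

theorem Matrix.isIdempotentElem_inv_card_smul_allOnes {ι K : Type*} [Fintype ι] [Field K] :
    IsIdempotentElem ((Fintype.card ι : K)⁻¹ • Matrix.of fun _ _ : ι => (1 : K)) := by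
  by_cases h : (Fintype.card ι : K) = 0
  · simp [IsIdempotentElem, h]
  · ext i j
    simp [Matrix.mul_apply]
    field_simp

section CompleteGraph

variable {ι : Type*} [Fintype ι] [DecidableEq ι]

open NormedSpace in
theorem Matrix.exp_smul_of_ite_apply_self (z : ℂ) (u : ι) :
    exp (z • Matrix.of fun i j : ι => if i = j then (0 : ℂ) else 1) u u
      = cexp (-z) * ((Fintype.card ι - 1 + cexp (Fintype.card ι * z)) / Fintype.card ι) := by
  have hn : (Fintype.card ι : ℂ) ≠ 0 := Nat.cast_ne_zero.2 (Fintype.card_pos_iff.2 ⟨u⟩).ne'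
  set P : Matrix ι ι ℂ := (Fintype.card ι : ℂ)⁻¹ • Matrix.of fun _ _ => 1 with hP
  have hsplit : (z • Matrix.of fun i j : ι => if i = j then (0 : ℂ) else 1)
      = (Fintype.card ι * z) • P + (-z) • (1 : Matrix ι ι ℂ) := by
    ext i j
    by_cases h : i = j <;> simp [hP, h, mul_assoc, mul_comm z, hn]
  have hcomm : Commute ((Fintype.card ι * z) • P) ((-z) • (1 : Matrix ι ι ℂ)) :=
    ((Commute.one_right _).smul_right _).smul_left _
  rw [hsplit, Matrix.exp_add_of_commute _ _ hcomm, isIdempotentElem_inv_card_smul_allOnes.exp_smul,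
    IsIdempotentElem.one.exp_smul, ← Complex.exp_eq_exp_ℂ]
  simp [hP]
  field_simp
  ring

theorem Matrix.norm_exp_I_mul_smul_of_ite_apply_self (t : ℝ) (u : ι) :
    ‖NormedSpace.exp ((I * t) • Matrix.of fun i j : ι => if i = j then (0 : ℂ) else 1) u u‖
      = ‖((Fintype.card ι - 1 : ℝ) : ℂ) + cexp ((Fintype.card ι * t : ℝ) * I)‖
        / Fintype.card ι := by
  rw [exp_smul_of_ite_apply_self, norm_mul, norm_div,
    show -(I * t) = ((-t : ℝ) : ℂ) * I by push_cast; ring, norm_exp_ofReal_mul_I, one_mul,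
    show (Fintype.card ι : ℂ) * (I * t) = ((Fintype.card ι * t : ℝ) : ℂ) * I by push_cast; ring,
    Complex.norm_natCast]
  norm_cast

end CompleteGraph

theorem norm_ofReal_add_exp_mul_I_eq_abs_sub_one_iff {m : ℝ} (hm : 0 < m) (θ : ℝ) :
    ‖(m : ℂ) + cexp (θ * I)‖ = |m - 1| ↔ Real.cos θ = -1 := by
  have hsq : ‖(m : ℂ) + cexp (θ * I)‖ ^ 2 = (m - 1) ^ 2 + 2 * m * (Real.cos θ + 1) := by
    rw [Complex.sq_norm, normSq_apply]
    simp only [add_re, add_im, ofReal_re, ofReal_im, exp_ofReal_mul_I_re, exp_ofReal_mul_I_im]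
    linear_combination Real.sin_sq_add_cos_sq θ
  rw [← sq_eq_sq₀ (norm_nonneg _) (abs_nonneg _), sq_abs, hsq, add_eq_left]
  simp [hm.ne', add_eq_zero_iff_eq_neg]

theorem Real.cos_eq_neg_one_iff_exists_odd {x : ℝ} :
    Real.cos x = -1 ↔ ∃ j : ℤ, Odd j ∧ x = j * Real.pi := by
  rw [Real.cos_eq_neg_one_iff]
  constructor
  · rintro ⟨k, rfl⟩
    exact ⟨2 * k + 1, odd_two_mul_add_one k, by push_cast; ring⟩
  · rintro ⟨_, ⟨k, rfl⟩, rfl⟩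
    exact ⟨k, by push_cast; ring⟩

/-- For the complete graph `K n` (`n ≥ 3`), equality `|U(t)_{u,u}| = 1 - 2/n`
holds if and only if `t = jπ/n` for some odd integer `j`. -/
theorem stmt_1 (n : ℕ) (hn : 3 ≤ n)
    (A : Matrix (Fin n) (Fin n) ℂ)
    (hA : A = Matrix.of fun i j => if i = j then 0 else 1)
    (t : ℝ) (u : Fin n) :
    ‖(NormedSpace.exp ((Complex.I * t) • A)) u u‖ = 1 - 2 / (n : ℝ) ↔
      ∃ j : ℤ, Odd j ∧ t = j * Real.pi / n := by
  have hn' : (3 : ℝ) ≤ n := by exact_mod_cast hn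
  have hbound : (1 - 2 / n : ℝ) * n = |(n - 1 : ℝ) - 1| := by
    rw [abs_of_nonneg (by linarith)]
    field_simp
    ring
  rw [hA, norm_exp_I_mul_smul_of_ite_apply_self, Fintype.card_fin, div_eq_iff (by linarith),
    hbound, norm_ofReal_add_exp_mul_I_eq_abs_sub_one_iff (by linarith),
    Real.cos_eq_neg_one_iff_exists_odd]
  refine exists_congr fun j => and_congr_right' ?_
  rw [eq_div_iff (by linarith), mul_comm]
end

section
/- Let H be a real symmetric matrix with spectral decomposition H = Σ_j λ_j E_j and let u be an index. If some single eigenvalue λ₁ satisfies (E₁)_{u,u} = a with a > 1/2, then |exp(itH)_{u,u}| ≥ 2a − 1 for all real t; in particular u is (2a−1)-sedentary. -/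
/-!
By the spectral decomposition, `exp(itH) = ∑ j, e^{itλ_j} E_j`, so `exp(itH)_{u,u}` is a convex
combination of unimodular numbers with the weights `(E_j)_{u,u} ≥ 0`, which sum to `1`. One term
has modulus `a`, the others together at most `1 - a`, so the triangle inequality gives
`|exp(itH)_{u,u}| ≥ a - (1 - a)`.
-/

open Complex Matrix

open scoped ComplexOrder

namespace CompleteOrthogonalIdempotents

variable {K A I : Type*} [CommSemiring K] [Semiring A] [Algebra K A] [Fintype I] [DecidableEq I]
  {e : I → A}

def piAlgHom (he : CompleteOrthogonalIdempotents e) : (I → K) →ₐ[K] A where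
  toFun v := ∑ i, v i • e i
  map_one' := by simpa using he.complete
  map_mul' v w := by
    simp_rw [Finset.sum_mul_sum, smul_mul_smul_comm, he.mul_eq, smul_ite, smul_zero,
      Finset.sum_ite_eq, Finset.mem_univ, if_true, Pi.mul_apply]
  map_zero' := by simp
  map_add' v w := by simp [add_smul, Finset.sum_add_distrib]
  commutes' c := by
    simp only [Pi.algebraMap_apply, Algebra.algebraMap_self, RingHom.id_apply, ← Finset.smul_sum,
      he.complete, Algebra.algebraMap_eq_smul_one]

@[simp]
lemma piAlgHom_apply (he : CompleteOrthogonalIdempotents e) (v : I → K) :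
    he.piAlgHom v = ∑ i, v i • e i := rfl

end CompleteOrthogonalIdempotents

lemma CompleteOrthogonalIdempotents.exp_sum_smul {𝕂 A I : Type*} [RCLike 𝕂] [NormedRing A]
    [NormedAlgebra 𝕂 A] [Fintype I] {e : I → A} (he : CompleteOrthogonalIdempotents e)
    (c : I → 𝕂) :
    NormedSpace.exp (∑ i, c i • e i) = ∑ i, NormedSpace.exp (c i) • e i := by
  classical
  -- `map_exp` asks for a `ℚ`-algebra structure on `A`; the one restricted from `𝕂` will do.
  let _ : Algebra ℚ A := RestrictScalars.algebra ℚ 𝕂 A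
  have hcont : Continuous (he.piAlgHom (K := 𝕂)) := by
    show Continuous fun v : I → 𝕂 => ∑ i, v i • e i
    fun_prop
  simpa [Pi.coe_exp] using (NormedSpace.map_exp (he.piAlgHom (K := 𝕂)) hcont c).symm

section

attribute [local instance] Matrix.linftyOpNormedRing Matrix.linftyOpNormedAlgebra

lemma Matrix.exp_sum_smul_of_completeOrthogonalIdempotents {𝕂 m I : Type*} [RCLike 𝕂]
    [Fintype m] [DecidableEq m] [Fintype I] {E : I → Matrix m m 𝕂}
    (hE : CompleteOrthogonalIdempotents E) (c : I → 𝕂) :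
    NormedSpace.exp (∑ i, c i • E i) = ∑ i, NormedSpace.exp (c i) • E i :=
  hE.exp_sum_smul c

end

lemma Matrix.IsHermitian.posSemidef_of_isIdempotentElem {m R : Type*} [Fintype m] [Ring R]
    [PartialOrder R] [StarRing R] [StarOrderedRing R] {E : Matrix m m R} (hE : E.IsHermitian)
    (hE' : IsIdempotentElem E) : E.PosSemidef := by
  simpa only [hE.eq, hE'.eq] using posSemidef_conjTranspose_mul_self E

lemma two_mul_sub_one_le_norm_sum_smul {ι E : Type*} [Fintype ι] [SeminormedAddCommGroup E]
    [NormedSpace ℝ E] {w : ι → ℝ} {x : ι → E} (hw : ∀ j, 0 ≤ w j) (hw_sum : ∑ j, w j = 1)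
    (hx : ∀ j, ‖x j‖ = 1) (i : ι) :
    2 * w i - 1 ≤ ‖∑ j, w j • x j‖ := by
  classical
  have hnorm : ∀ j, ‖w j • x j‖ = w j := fun j => by
    rw [norm_smul, hx, mul_one, Real.norm_of_nonneg (hw j)]
  have hrest : ∑ j ∈ Finset.univ.erase i, w j = 1 - w i := by
    rw [← hw_sum, ← Finset.add_sum_erase _ _ (Finset.mem_univ i), add_sub_cancel_left]
  rw [← Finset.add_sum_erase _ _ (Finset.mem_univ i)]
  calc 2 * w i - 1 = ‖w i • x i‖ - ∑ j ∈ Finset.univ.erase i, ‖w j • x j‖ := by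
        simp only [hnorm, hrest]; ring
    _ ≤ ‖w i • x i‖ - ‖∑ j ∈ Finset.univ.erase i, w j • x j‖ := by gcongr; exact norm_sum_le _ _
    _ ≤ _ := norm_sub_le_norm_add _ _

theorem stmt_5_general (n r : ℕ)
    (H : Matrix (Fin n) (Fin n) ℂ)
    (lam : Fin r → ℝ)
    (E : Fin r → Matrix (Fin n) (Fin n) ℂ)
    (hEherm : ∀ j, (E j).IsHermitian)
    (hEidem : ∀ j, E j * E j = E j)
    (hEorth : ∀ i j, i ≠ j → E i * E j = 0)
    (hEsum : ∑ j, E j = 1)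
    (hspec : H = ∑ j, (lam j : ℂ) • E j)
    (u : Fin n) (j₁ : Fin r)
    (a : ℝ)
    (haj : (E j₁) u u = (a : ℂ)) :
    ∀ t : ℝ, 2 * a - 1 ≤ ‖(NormedSpace.exp ((Complex.I * t) • H)) u u‖ := by
  intro t
  have hE : CompleteOrthogonalIdempotents E := ⟨⟨hEidem, fun i j => hEorth i j⟩, hEsum⟩
  have hexp : NormedSpace.exp ((Complex.I * t) • H) = ∑ j, cexp (↑(t * lam j) * I) • E j := by
    simp_rw [hspec, Finset.smul_sum, smul_smul]
    rw [exp_sum_smul_of_completeOrthogonalIdempotents hE]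
    simp_rw [← exp_eq_exp_ℂ]
    congr! 3
    push_cast; ring
  have hdiag : ∀ j, 0 ≤ E j u u := fun j =>
    ((hEherm j).posSemidef_of_isIdempotentElem (hEidem j)).diag_nonneg
  set w : Fin r → ℝ := fun j => (E j u u).re
  have hw : ∀ j, E j u u = w j := fun j => eq_re_of_ofReal_le (ofReal_zero ▸ hdiag j)
  have hw_sum : ∑ j, w j = 1 := by
    simp only [w, ← re_sum, ← Matrix.sum_apply, hEsum, one_apply_eq, one_re]
  have hentry :
      NormedSpace.exp ((Complex.I * t) • H) u u = ∑ j, w j • cexp (↑(t * lam j) * I) := by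
    simp [hexp, Matrix.sum_apply, hw, Complex.real_smul, mul_comm]
  rw [hentry, ← show w j₁ = a by simp [w, haj]]
  exact two_mul_sub_one_le_norm_sum_smul (fun j => (nonneg_iff.mp (hdiag j)).1) hw_sum
    (fun j => norm_exp_ofReal_mul_I _) j₁

/-- If `H = Σ λ_j E_j` is real symmetric and some single spectral projection satisfies
`(E₁)_{u,u} = a` with `a > 1/2`, then `|exp(itH)_{u,u}| ≥ 2a − 1` for all `t`;
in particular `u` is `(2a−1)`-sedentary. -/
theorem stmt_5 (n r : ℕ)
    (H : Matrix (Fin n) (Fin n) ℂ) (hH : H.IsHermitian)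
    (hHreal : ∀ i j, (H i j).im = 0)
    (lam : Fin r → ℝ) (hlam : Function.Injective lam)
    (E : Fin r → Matrix (Fin n) (Fin n) ℂ)
    (hEherm : ∀ j, (E j).IsHermitian)
    (hEidem : ∀ j, E j * E j = E j)
    (hEorth : ∀ i j, i ≠ j → E i * E j = 0)
    (hEsum : ∑ j, E j = 1)
    (hspec : H = ∑ j, (lam j : ℂ) • E j)
    (u : Fin n) (j₁ : Fin r)
    (a : ℝ) (ha : 1 / 2 < a)
    (haj : (E j₁) u u = (a : ℂ)) :
    ∀ t : ℝ, 2 * a - 1 ≤ ‖(NormedSpace.exp ((Complex.I * t) • H)) u u‖ :=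
  stmt_5_general n r H lam E hEherm hEidem hEorth hEsum hspec u j₁ a haj
end

section
/- Let T be a set of twins in a weighted graph X (all pairwise twins with common loop weight ω and common mutual edge weight η), and let M be the generalized adjacency matrix α D + A. Then for any vertex u ∈ T, |exp(itM)_{u,u}| ≥ 1 − 2/|T| for all real t. -/
/-!
For twins `u ≠ v` the vector `e_u - e_v` is an eigenvector of `M` with eigenvalue
`θ = α deg u + ω - η`, hence of the unitary `U = exp(itM)` with eigenvalue `c = e^{itθ}`,
`|c| = 1`. Its `u`-th coordinate gives `U u v = U u u - c` for every `v ∈ T \ {u}`, so the unit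
`u`-th row of `U` yields `|U u u|² + (|T| - 1) |U u u - c|² ≤ 1`. Together with
`|U u u - c| ≥ 1 - |U u u|` this forces `|U u u| ≥ 1 - 2/|T|`.
-/

theorem one_sub_two_div_le_of_sq_add_mul_sq_le {x d k : ℝ} (hk : 1 ≤ k) (hxd : 1 ≤ x + d)
    (h : x ^ 2 + (k - 1) * d ^ 2 ≤ 1) : 1 - 2 / k ≤ x := by
  rcases le_or_gt 1 x with hx | hx
  · linarith [div_pos two_pos (by linarith : 0 < k)]
  rw [sub_le_comm, le_div_iff₀ (by linarith)]
  nlinarith [mul_le_mul (by linarith : 1 - x ≤ d) (by linarith : 1 - x ≤ d) (by linarith)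
    (by linarith)]

namespace Matrix

open NormedSpace

variable {n : Type*} [Fintype n] [DecidableEq n]

theorem mulVec_single_sub_single {R : Type*} [Ring R] (M : Matrix n n R) {u v : n} {θ : R}
    (hu : M u u - M u v = θ) (hv : M v v - M v u = θ)
    (hw : ∀ w, w ≠ u → w ≠ v → M w u = M w v) :
    M *ᵥ (Pi.single u 1 - Pi.single v 1) = θ • (Pi.single u 1 - Pi.single v 1) := by
  ext w
  rcases eq_or_ne u v with rfl | huv
  · simp [← hu]
  simp only [mulVec_sub, mulVec_single_one, Pi.sub_apply, Pi.smul_apply, col_apply, smul_eq_mul]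
  rcases eq_or_ne w u with rfl | hwu
  · simp [Pi.single_eq_of_ne huv, hu]
  rcases eq_or_ne w v with rfl | hwv
  · simp [Pi.single_eq_of_ne hwu, ← hv]
  simp [Pi.single_eq_of_ne hwu, Pi.single_eq_of_ne hwv, hw w hwu hwv]

theorem IsSymm.sum_apply_eq_of_twin {α : Type*} [AddCommMonoid α] {A : Matrix n n α}
    (hA : A.IsSymm) {u v : n} (hdiag : A u u = A v v)
    (htwin : ∀ w, w ≠ u → w ≠ v → A u w = A v w) : ∑ j, A u j = ∑ j, A v j := by
  refine Fintype.sum_equiv (Equiv.swap u v) _ _ fun j => ?_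
  rcases eq_or_ne j u with rfl | hju
  · simp [hdiag]
  rcases eq_or_ne j v with rfl | hjv
  · simpa using hA.apply j u
  rw [Equiv.swap_apply_of_ne_of_ne hju hjv, htwin j hju hjv]

variable {𝕜 : Type*} [RCLike 𝕜]

theorem exp_mulVec_of_mulVec_eq_smul {S : Matrix n n 𝕜} {x : n → 𝕜} {θ : 𝕜}
    (h : S *ᵥ x = θ • x) : exp S *ᵥ x = exp θ • x := by
  have hpow (k : ℕ) : S ^ k *ᵥ x = θ ^ k • x := by
    induction k with
    | zero => simp
    | succ k ih => rw [pow_succ, ← mulVec_mulVec, h, mulVec_smul, ih, smul_smul, pow_succ']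
  have hS : HasSum (fun k => ((k.factorial⁻¹ : 𝕜) • S ^ k) *ᵥ x) (exp S *ᵥ x) := by
    open scoped Matrix.Norms.Operator in
    exact (exp_series_hasSum_exp' (𝕂 := 𝕜) S).map (mulVec.addMonoidHomLeft x)
      (continuous_id.matrix_mulVec continuous_const)
  have hθ : HasSum (fun k => ((k.factorial⁻¹ : 𝕜) • θ ^ k) • x) (exp θ • x) :=
    (exp_series_hasSum_exp' (𝕂 := 𝕜) θ).smul_const x
  refine hS.unique (hθ.congr_fun fun k => ?_)
  rw [smul_mulVec, hpow, smul_smul, smul_eq_mul]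

theorem exp_mem_unitaryGroup_of_mem_skewAdjoint {S : Matrix n n 𝕜}
    (hS : S ∈ skewAdjoint (Matrix n n 𝕜)) : exp S ∈ unitaryGroup n 𝕜 := by
  rw [Unitary.mem_iff, star_eq_conjTranspose, ← exp_conjTranspose, ← star_eq_conjTranspose,
    skewAdjoint.mem_iff.mp hS, ← exp_add_of_commute _ _ (Commute.refl S).neg_left,
    ← exp_add_of_commute _ _ (Commute.refl S).neg_right, neg_add_cancel, add_neg_cancel,
    exp_zero, and_self]

theorem sum_norm_sq_apply_of_mem_unitaryGroup {U : Matrix n n 𝕜} (hU : U ∈ unitaryGroup n 𝕜)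
    (i : n) : ∑ j, ‖U i j‖ ^ 2 = 1 := by
  have h : (U * Uᴴ) i i = 1 := by
    rw [← star_eq_conjTranspose, mem_unitaryGroup_iff.mp hU, one_apply_eq]
  simp only [mul_apply, conjTranspose_apply, RCLike.star_def, RCLike.mul_conj] at h
  exact_mod_cast h

theorem one_sub_two_div_card_le_norm_apply_self {U : Matrix n n 𝕜} (hU : U ∈ unitaryGroup n 𝕜)
    {T : Finset n} {u : n} (hu : u ∈ T) {c : 𝕜} (hc : ‖c‖ = 1)
    (hT : ∀ v ∈ T, v ≠ u →
      U *ᵥ (Pi.single u 1 - Pi.single v 1) = c • (Pi.single u 1 - Pi.single v 1)) :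
    1 - 2 / (T.card : ℝ) ≤ ‖U u u‖ := by
  have hrow (v : n) (hv : v ∈ T.erase u) : U u v = U u u - c := by
    obtain ⟨hvu, hvT⟩ := Finset.mem_erase.mp hv
    have h := congrFun (hT v hvT hvu) u
    simp only [mulVec_sub, mulVec_single_one, Pi.sub_apply, col_apply, Pi.smul_apply,
      Pi.single_eq_same, Pi.single_eq_of_ne hvu.symm, sub_zero, smul_eq_mul, mul_one] at h
    rw [← h, sub_sub_cancel]
  have hcard : 0 < T.card := Finset.card_pos.mpr ⟨u, hu⟩
  have hsum : ‖U u u‖ ^ 2 + (T.card - 1) * ‖U u u - c‖ ^ 2 ≤ 1 :=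
    calc _ = ∑ j ∈ T, ‖U u j‖ ^ 2 := by
          rw [← Finset.add_sum_erase _ _ hu, Finset.sum_congr rfl fun v hv => by rw [hrow v hv],
            Finset.sum_const, Finset.card_erase_of_mem hu, nsmul_eq_mul, Nat.cast_pred hcard]
      _ ≤ ∑ j, ‖U u j‖ ^ 2 := Finset.sum_le_univ_sum_of_nonneg fun _ => by positivity
      _ = 1 := sum_norm_sq_apply_of_mem_unitaryGroup hU u
  refine one_sub_two_div_le_of_sq_add_mul_sq_le (by exact_mod_cast hcard) ?_ hsum
  simpa [hc] using norm_le_norm_add_norm_sub (U u u) c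

end Matrix

open Complex Matrix

theorem stmt_6_general {V : Type*} [Fintype V] [DecidableEq V]
    (A : Matrix V V ℝ) (hA : A.IsSymm)
    (α ω η : ℝ)
    (deg : V → ℝ) (hdeg : ∀ u, deg u = A u u + ∑ j, A u j)
    (T : Finset V)
    (hloop : ∀ u ∈ T, A u u = ω)
    (hedge : ∀ u ∈ T, ∀ v ∈ T, u ≠ v → A u v = η)
    (htwin : ∀ u ∈ T, ∀ v ∈ T, u ≠ v → ∀ w, w ≠ u → w ≠ v → A u w = A v w)
    (M : Matrix V V ℂ)
    (hM : M = (α • Matrix.diagonal deg + A).map Complex.ofReal) :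
    ∀ u ∈ T, ∀ t : ℝ,
      1 - 2 / (T.card : ℝ) ≤
        ‖(NormedSpace.exp ((Complex.I * t) • M)) u u‖ := by
  intro u hu t
  set θ : ℝ := α * deg u + ω - η
  have hMapply (a b : V) : M a b = ((α • diagonal deg + A) a b : ℝ) := by rw [hM, map_apply]
  have hMherm : M.IsHermitian :=
    hM ▸ (isHermitian_iff_isSymm.mpr (((isSymm_diagonal deg).smul α).add hA)).map _
      fun _ => (conj_ofReal _).symm
  have hskew : (I * t) • M ∈ skewAdjoint (Matrix V V ℂ) :=
    hMherm.isSelfAdjoint.smul_mem_skewAdjoint (by simp [skewAdjoint.mem_iff])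
  have hc : ‖NormedSpace.exp (I * t * θ)‖ = 1 := by
    rw [← exp_eq_exp_ℂ, ← norm_exp_ofReal_mul_I (t * θ)]
    push_cast
    ring_nf
  refine one_sub_two_div_card_le_norm_apply_self (exp_mem_unitaryGroup_of_mem_skewAdjoint hskew)
    hu hc fun v hv hvu => exp_mulVec_of_mulVec_eq_smul ?_
  have huv := hvu.symm
  have hdeg_eq : deg v = deg u := by
    rw [hdeg, hdeg, hloop u hu, hloop v hv,
      hA.sum_apply_eq_of_twin ((hloop u hu).trans (hloop v hv).symm) (htwin u hu v hv huv)]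
  rw [smul_mulVec, mulVec_single_sub_single M (θ := θ), smul_smul]
  · simp [hMapply, huv, hloop u hu, hedge u hu v hv huv, θ]
  · simp [hMapply, hvu, hloop v hv, hedge v hv u hu hvu, hdeg_eq, θ]
  · intro w hwu hwv
    simp [hMapply, hwu, hwv, hA.apply u w, hA.apply v w, htwin u hu v hv huv w hwu hwv]

/-- If `T` is a set of twins in a weighted graph `X` (pairwise twins with common loop
weight `ω` and common mutual edge weight `η`) and `M = αD + A` is a generalized
adjacency matrix, then every `u ∈ T` satisfies `|exp(itM)_{u,u}| ≥ 1 − 2/|T|`. -/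
theorem stmt_6 {V : Type*} [Fintype V] [DecidableEq V]
    (A : Matrix V V ℝ) (hA : A.IsSymm)
    (α ω η : ℝ)
    (deg : V → ℝ) (hdeg : ∀ u, deg u = A u u + ∑ j, A u j)
    (T : Finset V) (hT : 2 ≤ T.card)
    (hloop : ∀ u ∈ T, A u u = ω)
    (hedge : ∀ u ∈ T, ∀ v ∈ T, u ≠ v → A u v = η)
    (htwin : ∀ u ∈ T, ∀ v ∈ T, u ≠ v → ∀ w, w ≠ u → w ≠ v → A u w = A v w)
    (M : Matrix V V ℂ)
    (hM : M = (α • Matrix.diagonal deg + A).map Complex.ofReal) :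
    ∀ u ∈ T, ∀ t : ℝ,
      1 - 2 / (T.card : ℝ) ≤
        ‖(NormedSpace.exp ((Complex.I * t) • M)) u u‖ :=
  stmt_6_general A hA α ω η deg hdeg T hloop hedge htwin M hM
end

section
/- If H is a real symmetric matrix, u is periodic at u with minimum period ρ > 0 (i.e., |exp(iρH)_{u,u}| = 1), then |exp(i(t+ρ)H)_{u,u}| = |exp(itH)_{u,u}| for all t; consequently inf_{t>0}|exp(itH)_{u,u}| = min_{t ∈ [0,ρ]} |exp(itH)_{u,u}|, and u is tightly sedentary (the infimum is attained and positive) if and only if exp(itH)_{u,u} ≠ 0 for all t ∈ [0,ρ]. -/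
/-!
`U(t) = exp(itH)` is a unitary one-parameter group. Since the column `U(ρ) e_u` is a unit
vector with `|U(ρ)_{u,u}| = 1`, it equals `γ e_u`, so `U(t + ρ)_{u,u} = U(t)_{u,u} γ` and
`t ↦ |U(t)_{u,u}|` is continuous and `ρ`-periodic. Its values on `t > 0` and on `[0, ρ]` are
therefore both its whole range, a compact set whose minimum is attained on `(0, ρ]`.
-/

open Complex Matrix Set

namespace Function.Periodic

variable {α : Type*} {f : ℝ → α} {c : ℝ}

theorem image_Ioi (hf : Periodic f c) (hc : 0 < c) (a : ℝ) : f '' Ioi a = range f :=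
  (image_subset_range _ _).antisymm <|
    hf.image_Ioc hc a ▸ image_mono fun _ hx => hx.1

theorem exists_mem_Ioc_forall_le [LinearOrder α] [TopologicalSpace α] [ClosedIicTopology α]
    (hf : Periodic f c) (hc : 0 < c) (hcont : Continuous f)
    (a : ℝ) : ∃ t₀ ∈ Ioc a (a + c), ∀ t, f t₀ ≤ f t := by
  obtain ⟨_, ⟨t₁, rfl⟩, hmin⟩ :=
    (hf.compact_of_continuous hc.ne' hcont).exists_isLeast (range_nonempty f)
  obtain ⟨t₀, ht₀, heq⟩ := hf.exists_mem_Ioc hc t₁ a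
  exact ⟨t₀, ht₀, fun t => heq ▸ hmin (mem_range_self t)⟩

end Function.Periodic

namespace Matrix

variable {n 𝕜 : Type*} [Fintype n] [DecidableEq n] [RCLike 𝕜]

theorem sum_norm_sq_apply_of_mem_unitaryGroup_s8 {A : Matrix n n 𝕜} (hA : A ∈ unitaryGroup n 𝕜)
    (u : n) : ∑ k, ‖A k u‖ ^ 2 = 1 := by
  have h := congrFun₂ (mem_unitaryGroup_iff'.1 hA) u u
  simp only [star_eq_conjTranspose, mul_apply, conjTranspose_apply, RCLike.star_def,
    RCLike.conj_mul, one_apply_eq] at h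
  exact_mod_cast h

theorem apply_eq_zero_of_norm_apply_self_eq_one {A : Matrix n n 𝕜}
    (hA : A ∈ unitaryGroup n 𝕜) {u : n} (hu : ‖A u u‖ = 1) {k : n} (hk : k ≠ u) :
    A k u = 0 := by
  have hpair := Finset.sum_le_sum_of_subset_of_nonneg (Finset.subset_univ {k, u})
    fun i _ _ => sq_nonneg ‖A i u‖
  rw [Finset.sum_pair hk, hu, sum_norm_sq_apply_of_mem_unitaryGroup_s8 hA] at hpair
  have : ‖A k u‖ ^ 2 = 0 := le_antisymm (by linarith) (sq_nonneg _)
  simpa using this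

theorem norm_mul_apply_self_of_norm_apply_self_eq_one (B : Matrix n n 𝕜) {A : Matrix n n 𝕜}
    (hA : A ∈ unitaryGroup n 𝕜) {u : n} (hu : ‖A u u‖ = 1) : ‖(B * A) u u‖ = ‖B u u‖ := by
  rw [mul_apply, Finset.sum_eq_single u
    (fun k _ hk => by rw [apply_eq_zero_of_norm_apply_self_eq_one hA hu hk, mul_zero])
    (by simp), norm_mul, hu, mul_one]

theorem exp_add_smul (H : Matrix n n ℂ) (a b : ℂ) :
    NormedSpace.exp ((a + b) • H) = NormedSpace.exp (a • H) * NormedSpace.exp (b • H) := by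
  rw [add_smul, exp_add_of_commute _ _ (((Commute.refl H).smul_left _).smul_right _)]

theorem IsHermitian.exp_I_mul_smul_mem_unitaryGroup {H : Matrix n n ℂ} (hH : H.IsHermitian)
    (t : ℝ) : NormedSpace.exp ((I * t) • H) ∈ unitaryGroup n ℂ := by
  rw [mem_unitaryGroup_iff', star_eq_conjTranspose, ← exp_conjTranspose, conjTranspose_smul,
    hH.eq, ← exp_add_smul]
  simp

theorem continuous_exp_I_mul_smul (H : Matrix n n ℂ) :
    Continuous fun t : ℝ => NormedSpace.exp ((I * t) • H) := by
  open scoped Norms.Operator in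
  exact NormedSpace.exp_continuous.comp (by fun_prop)

theorem IsHermitian.periodic_norm_exp_I_mul_smul_apply {H : Matrix n n ℂ} (hH : H.IsHermitian)
    {u : n} {ρ : ℝ} (hρ : ‖NormedSpace.exp ((I * ρ) • H) u u‖ = 1) :
    Function.Periodic (fun t : ℝ => ‖NormedSpace.exp ((I * t) • H) u u‖) ρ := fun t => by
  simp only [ofReal_add, mul_add, exp_add_smul]
  exact norm_mul_apply_self_of_norm_apply_self_eq_one _
    (hH.exp_I_mul_smul_mem_unitaryGroup ρ) hρ

end Matrix

theorem stmt_8_general (n : ℕ)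
    (H : Matrix (Fin n) (Fin n) ℂ) (hH : H.IsHermitian)
    (u : Fin n) (ρ : ℝ) (hρ : 0 < ρ)
    (f : ℝ → ℝ)
    (hf : ∀ t, f t = ‖(NormedSpace.exp ((Complex.I * t) • H)) u u‖)
    (hper : f ρ = 1) :
    (∀ t, f (t + ρ) = f t) ∧
    sInf (f '' Set.Ioi 0) = sInf (f '' Set.Icc 0 ρ) ∧
    (((∃ t₀ > 0, f t₀ = sInf (f '' Set.Ioi 0)) ∧ 0 < sInf (f '' Set.Ioi 0)) ↔
      ∀ t ∈ Set.Icc (0 : ℝ) ρ,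
        (NormedSpace.exp ((Complex.I * t) • H)) u u ≠ 0) := by
  have hf' : f = fun t : ℝ => ‖NormedSpace.exp ((I * t) • H) u u‖ := funext hf
  have hperiodic : Function.Periodic f ρ :=
    hf' ▸ hH.periodic_norm_exp_I_mul_smul_apply (hf ρ ▸ hper)
  have hcont : Continuous f := hf' ▸ ((continuous_exp_I_mul_smul H).matrix_elem u u).norm
  have hIcc := hperiodic.image_Icc hρ 0
  obtain ⟨t₀, ht₀, hmin⟩ := hperiodic.exists_mem_Ioc_forall_le hρ hcont 0
  rw [zero_add] at hIcc ht₀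
  have hinf : sInf (range f) = f t₀ :=
    IsLeast.csInf_eq ⟨mem_range_self t₀, forall_mem_range.2 hmin⟩
  rw [hperiodic.image_Ioi hρ, hIcc, hinf]
  refine ⟨hperiodic, rfl, ⟨fun ⟨_, hpos⟩ t _ => ?_, fun hne => ⟨⟨t₀, ht₀.1, rfl⟩, ?_⟩⟩⟩
  · exact norm_ne_zero_iff.1 (hf t ▸ (hpos.trans_le (hmin t)).ne')
  · exact hf t₀ ▸ norm_pos_iff.2 (hne t₀ (Ioc_subset_Icc_self ht₀))

/-- If `u` is periodic with minimum period `ρ > 0` (i.e. `|exp(iρH)_{u,u}| = 1`), then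
`|exp(i(t+ρ)H)_{u,u}| = |exp(itH)_{u,u}|` for all `t`, the infimum over `t > 0` equals
the minimum over `[0, ρ]`, and `u` is tightly sedentary (infimum attained and positive)
iff `exp(itH)_{u,u} ≠ 0` for all `t ∈ [0, ρ]`. -/
theorem stmt_8 (n : ℕ)
    (H : Matrix (Fin n) (Fin n) ℂ) (hH : H.IsHermitian)
    (hHreal : ∀ i j, (H i j).im = 0)
    (u : Fin n) (ρ : ℝ) (hρ : 0 < ρ)
    (f : ℝ → ℝ)
    (hf : ∀ t, f t = ‖(NormedSpace.exp ((Complex.I * t) • H)) u u‖)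
    (hper : f ρ = 1)
    (hmin : ∀ s, 0 < s → s < ρ → f s ≠ 1) :
    (∀ t, f (t + ρ) = f t) ∧
    sInf (f '' Set.Ioi 0) = sInf (f '' Set.Icc 0 ρ) ∧
    (((∃ t₀ > 0, f t₀ = sInf (f '' Set.Ioi 0)) ∧ 0 < sInf (f '' Set.Ioi 0)) ↔
      ∀ t ∈ Set.Icc (0 : ℝ) ρ,
        (NormedSpace.exp ((Complex.I * t) • H)) u u ≠ 0) :=
  stmt_8_general n H hH u ρ hρ f hf hper
end

section
/- Let Y = K_m ∨ X be the join of K_m (m ≥ 1) with a simple positively weighted graph X on n ≥ 2 vertices, with Laplacian L. Then for any vertex u of K_m, U_L(t)_{u,u} = 1/(m+n) + ((m+n−1)/(m+n)) e^{it(m+n)}, and hence |U_L(t)_{u,u}| ≥ 1 − 2/(m+n) for all t, with equality if and only if t = jπ/(m+n) for some odd integer j. -/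
/-!
A dominating vertex `u` of a weighted graph on `N` vertices makes the Laplacian act on `e_u` by
`L e_u = N e_u - 𝟙`, while `L 𝟙 = 0`. Hence `e_u = 𝟙/N + (e_u - 𝟙/N)` splits `e_u` into
eigenvectors of `L` for the eigenvalues `0` and `N`, which gives
`U_L(t)_{u,u} = 1/N + (N-1)/N · e^{itN}`.
Writing `a = 1/N`, `b = (N-1)/N`, one has `|a + b e^{iθ}|² = (b-a)² + 2ab(1 + cos θ)`,
so the modulus is at least `b - a = 1 - 2/N`, with equality exactly when `cos (tN) = -1`.
-/

open Complex Matrix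

namespace Matrix

variable {ι R S : Type*}

def IsDominating [Zero R] [One R] (A : Matrix ι ι R) (u : ι) : Prop :=
  A u u = 0 ∧ ∀ x, x ≠ u → A u x = 1 ∧ A x u = 1

theorem IsDominating.map [Semiring R] [Semiring S] (f : R →+* S) {A : Matrix ι ι R} {u : ι}
    (h : A.IsDominating u) : (A.map f).IsDominating u :=
  ⟨by simp [h.1], fun x hx => by simp [(h.2 x hx).1, (h.2 x hx).2]⟩

theorem isDominating_inl_fromBlocks {m n R : Type*} [Zero R] [One R] [DecidableEq m]
    (W : Matrix n n R) (i : m) :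
    (fromBlocks (of fun i j : m => if i = j then (0 : R) else 1) (of fun _ _ => 1)
      (of fun _ _ => 1) W).IsDominating (Sum.inl i) := by
  refine ⟨by simp, fun x hx => ?_⟩
  rcases x with j | j
  · simp [Ne.symm (Sum.inl_injective.ne_iff.1 hx), Sum.inl_injective.ne_iff.1 hx]
  · simp

variable [Fintype ι] [DecidableEq ι]

def laplacian [Ring R] (A : Matrix ι ι R) : Matrix ι ι R :=
  diagonal (fun x => ∑ y, A x y) - A

section Ring

variable [Ring R] {A : Matrix ι ι R}

theorem laplacian_map [Ring S] (f : R →+* S) :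
    (laplacian A).map f = laplacian (A.map f) := by
  ext x y
  simp [laplacian, diagonal_apply, apply_ite f]

theorem laplacian_mulVec_one : laplacian A *ᵥ 1 = 0 := by
  ext x
  simp [laplacian, mulVec, dotProduct, diagonal_apply]

theorem IsDominating.sum_row {u : ι} (h : A.IsDominating u) :
    ∑ y, A u y = Fintype.card ι - 1 := by
  rw [← Finset.add_sum_erase _ _ (Finset.mem_univ u), h.1, zero_add,
    Finset.sum_congr rfl fun x hx => (h.2 x (Finset.ne_of_mem_erase hx)).1]
  simp [Finset.card_erase_of_mem, Nat.cast_pred (Fintype.card_pos_iff.2 ⟨u⟩)]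

theorem IsDominating.laplacian_mulVec_single {u : ι} (h : A.IsDominating u) :
    laplacian A *ᵥ Pi.single u 1 = (Fintype.card ι : R) • Pi.single u 1 - 1 := by
  ext x
  rw [mulVec_single_one]
  rcases eq_or_ne x u with rfl | hx
  · simp [laplacian, h.sum_row, h.1]
  · simp [laplacian, hx, (h.2 x hx).2]

end Ring

open scoped Matrix.Norms.Operator in
theorem exp_mulVec_of_mulVec_eq_smul_s11 (A : Matrix ι ι ℂ) {v : ι → ℂ} {c : ℂ}
    (h : A *ᵥ v = c • v) : NormedSpace.exp A *ᵥ v = Complex.exp c • v := by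
  have hpow (k : ℕ) : A ^ k *ᵥ v = c ^ k • v := by
    induction k with
    | zero => simp
    | succ k ih => rw [pow_succ', ← mulVec_mulVec, ih, mulVec_smul, h, smul_smul, pow_succ]
  have hA := (NormedSpace.exp_series_hasSum_exp' (𝕂 := ℂ) A).map
    (mulVec.addMonoidHomLeft v) (continuous_id.matrix_mulVec continuous_const)
  have hc := (NormedSpace.exp_series_hasSum_exp' (𝕂 := ℂ) c).smul_const v
  simp only [Function.comp_def, mulVec.addMonoidHomLeft, AddMonoidHom.coe_mk, ZeroHom.coe_mk,
    smul_mulVec, hpow, smul_smul] at hA hc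
  rw [Complex.exp_eq_exp_ℂ]
  exact hA.unique hc

theorem IsDominating.exp_smul_laplacian_apply {A : Matrix ι ι ℂ} {u : ι} (h : A.IsDominating u)
    (s : ℂ) :
    NormedSpace.exp (s • laplacian A) u u =
      1 / Fintype.card ι +
        (Fintype.card ι - 1) / Fintype.card ι * Complex.exp (s * Fintype.card ι) := by
  set N : ℂ := (Fintype.card ι : ℂ)
  have hN : N ≠ 0 := Nat.cast_ne_zero.2 (Fintype.card_pos_iff.2 ⟨u⟩).ne'
  set e : ι → ℂ := Pi.single u 1
  set w : ι → ℂ := e - N⁻¹ • 1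
  have hone : (s • laplacian A) *ᵥ 1 = (0 : ℂ) • 1 := by
    rw [smul_mulVec, laplacian_mulVec_one, smul_zero, zero_smul]
  have hw : (s • laplacian A) *ᵥ w = (s * N) • w := by
    rw [smul_mulVec, mulVec_sub, mulVec_smul, laplacian_mulVec_one, h.laplacian_mulVec_single,
      smul_zero, sub_zero, smul_sub, smul_sub, smul_smul, smul_smul, mul_assoc, mul_inv_cancel₀ hN,
      mul_one]
  have hexp : NormedSpace.exp (s • laplacian A) *ᵥ e = N⁻¹ • 1 + Complex.exp (s * N) • w := by
    rw [show e = N⁻¹ • 1 + w by module, mulVec_add, mulVec_smul,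
      exp_mulVec_of_mulVec_eq_smul_s11 _ hone, exp_mulVec_of_mulVec_eq_smul_s11 _ hw,
      Complex.exp_zero, one_smul]
  have hu := congrFun hexp u
  simp only [e, mulVec_single_one, col_apply] at hu
  rw [hu]
  simp [w, e]
  field_simp

end Matrix

theorem norm_ofReal_add_mul_exp_mul_I_sq (a b θ : ℝ) :
    ‖(a : ℂ) + b * exp (θ * I)‖ ^ 2 = (b - a) ^ 2 + 2 * a * b * (1 + Real.cos θ) := by
  have hz : (a : ℂ) + b * exp (θ * I) = (a + b * Real.cos θ : ℝ) + (b * Real.sin θ : ℝ) * I := by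
    rw [exp_mul_I, ← ofReal_cos, ← ofReal_sin]
    push_cast
    ring
  rw [hz, Complex.sq_norm, normSq_add_mul_I]
  linear_combination b ^ 2 * Real.sin_sq_add_cos_sq θ

theorem sub_le_norm_ofReal_add_mul_exp_mul_I {a : ℝ} (ha : 0 ≤ a) (b θ : ℝ) :
    b - a ≤ ‖(a : ℂ) + b * exp (θ * I)‖ :=
  calc b - a ≤ ‖(b : ℂ) * exp (θ * I)‖ - ‖(a : ℂ)‖ := by
        simp [norm_exp_ofReal_mul_I, abs_of_nonneg ha, le_abs_self]
    _ ≤ ‖(a : ℂ) + b * exp (θ * I)‖ := by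
        simpa [add_comm] using norm_sub_norm_le ((b : ℂ) * exp (θ * I)) (-(a : ℂ))

theorem norm_ofReal_add_mul_exp_mul_I_eq_sub_iff {a b : ℝ} (ha : 0 < a) (hab : a ≤ b) (θ : ℝ) :
    ‖(a : ℂ) + b * exp (θ * I)‖ = b - a ↔ Real.cos θ = -1 := by
  have hab' : 2 * a * b ≠ 0 := by have := ha.trans_le hab; positivity
  rw [← sq_eq_sq₀ (norm_nonneg _) (sub_nonneg.2 hab), norm_ofReal_add_mul_exp_mul_I_sq,
    add_eq_left, mul_eq_zero, or_iff_right hab']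
  constructor <;> intro h <;> linarith

theorem Real.cos_mul_eq_neg_one_iff {N : ℝ} (hN : N ≠ 0) (t : ℝ) :
    Real.cos (t * N) = -1 ↔ ∃ j : ℤ, Odd j ∧ t = j * Real.pi / N := by
  simp_rw [Real.cos_eq_neg_one_iff, eq_div_iff hN]
  constructor
  · rintro ⟨k, hk⟩
    exact ⟨2 * k + 1, odd_two_mul_add_one k, by push_cast; linarith⟩
  · rintro ⟨j, ⟨k, rfl⟩, ht⟩
    exact ⟨k, by push_cast at ht; linarith⟩

theorem stmt_11_general (m n : ℕ) (hn : 2 ≤ n)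
    (W : Matrix (Fin n) (Fin n) ℝ)
    (Adj : Matrix (Fin m ⊕ Fin n) (Fin m ⊕ Fin n) ℝ)
    (hAdj : Adj = Matrix.fromBlocks
      (Matrix.of fun i j : Fin m => if i = j then 0 else 1)
      (Matrix.of fun _ _ => 1) (Matrix.of fun _ _ => 1) W)
    (L : Matrix (Fin m ⊕ Fin n) (Fin m ⊕ Fin n) ℂ)
    (hL : L = (Matrix.diagonal (fun x => ∑ y, Adj x y) - Adj).map Complex.ofReal)
    (i : Fin m) (t : ℝ) :
    (NormedSpace.exp ((Complex.I * t) • L)) (Sum.inl i) (Sum.inl i) =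
        1 / ((m : ℂ) + n) + (((m : ℂ) + n - 1) / ((m : ℂ) + n)) *
          Complex.exp (Complex.I * t * ((m : ℕ) + n)) ∧
    1 - 2 / ((m : ℝ) + n) ≤
        ‖(NormedSpace.exp ((Complex.I * t) • L)) (Sum.inl i) (Sum.inl i)‖ ∧
    (‖(NormedSpace.exp ((Complex.I * t) • L)) (Sum.inl i) (Sum.inl i)‖ =
        1 - 2 / ((m : ℝ) + n) ↔
      ∃ j : ℤ, Odd j ∧ t = j * Real.pi / ((m : ℝ) + n)) := by
  have hval : NormedSpace.exp ((Complex.I * t) • L) (Sum.inl i) (Sum.inl i) =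
      1 / ((m : ℂ) + n) + (((m : ℂ) + n - 1) / ((m : ℂ) + n)) *
        Complex.exp (Complex.I * t * ((m : ℕ) + n)) := by
    have hL' : L = laplacian (Adj.map ofRealHom) := hL.trans (laplacian_map ofRealHom)
    rw [hL', hAdj, ((isDominating_inl_fromBlocks W i).map ofRealHom).exp_smul_laplacian_apply]
    simp
  set N : ℝ := m + n with hN
  have hN2 : 2 ≤ N := by rw [hN]; norm_cast; omega
  have hform : 1 / ((m : ℂ) + n) + (((m : ℂ) + n - 1) / ((m : ℂ) + n)) *
      Complex.exp (Complex.I * t * ((m : ℕ) + n)) =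
      ((1 / N : ℝ) : ℂ) + ((N - 1) / N : ℝ) * exp ((t * N : ℝ) * I) := by
    rw [hN]
    push_cast
    ring_nf
  have hgap : (N - 1) / N - 1 / N = 1 - 2 / N := by field_simp; ring
  refine ⟨hval, ?_, ?_⟩
  · rw [hval, hform, ← hgap]
    exact sub_le_norm_ofReal_add_mul_exp_mul_I (by positivity) _ _
  · rw [hval, hform, ← hgap, norm_ofReal_add_mul_exp_mul_I_eq_sub_iff (by positivity)
      (by gcongr; linarith), Real.cos_mul_eq_neg_one_iff (by positivity)]

/-- For the join `K_m ∨ X` (`m ≥ 1`, `X` a simple positively weighted graph on `n ≥ 2`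
vertices), with Laplacian `L`, any vertex `u` of `K_m` satisfies
`U_L(t)_{u,u} = 1/(m+n) + ((m+n−1)/(m+n)) e^{it(m+n)}`, hence
`|U_L(t)_{u,u}| ≥ 1 − 2/(m+n)`, with equality iff `t = jπ/(m+n)` for some odd `j`. -/
theorem stmt_11 (m n : ℕ) (hm : 1 ≤ m) (hn : 2 ≤ n)
    (W : Matrix (Fin n) (Fin n) ℝ) (hWs : W.IsSymm)
    (hW0 : ∀ i, W i i = 0) (hWpos : ∀ i j, 0 ≤ W i j)
    (Adj : Matrix (Fin m ⊕ Fin n) (Fin m ⊕ Fin n) ℝ)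
    (hAdj : Adj = Matrix.fromBlocks
      (Matrix.of fun i j : Fin m => if i = j then 0 else 1)
      (Matrix.of fun _ _ => 1) (Matrix.of fun _ _ => 1) W)
    (L : Matrix (Fin m ⊕ Fin n) (Fin m ⊕ Fin n) ℂ)
    (hL : L = (Matrix.diagonal (fun x => ∑ y, Adj x y) - Adj).map Complex.ofReal)
    (i : Fin m) (t : ℝ) :
    (NormedSpace.exp ((Complex.I * t) • L)) (Sum.inl i) (Sum.inl i) =
        1 / ((m : ℂ) + n) + (((m : ℂ) + n - 1) / ((m : ℂ) + n)) *
          Complex.exp (Complex.I * t * ((m : ℕ) + n)) ∧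
    1 - 2 / ((m : ℝ) + n) ≤
        ‖(NormedSpace.exp ((Complex.I * t) • L)) (Sum.inl i) (Sum.inl i)‖ ∧
    (‖(NormedSpace.exp ((Complex.I * t) • L)) (Sum.inl i) (Sum.inl i)‖ =
        1 - 2 / ((m : ℝ) + n) ↔
      ∃ j : ℤ, Odd j ∧ t = j * Real.pi / ((m : ℝ) + n)) :=
  stmt_11_general m n hn W Adj hAdj L hL i t
end

section
/- Let u be an apex of O₂ ∨ X where X is a simple positively weighted graph on n vertices with n ≡ 0 (mod 4). Then with respect to the Laplacian, |U_L(t)_{u,u}| ≥ 2/(n+2) for all t, with equality if and only if t = jπ/2 for an odd integer j. -/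
/-!
The column of `exp (i t L)` at an apex is computed from three eigenvectors of `L` that are
constant on `X`: the all-ones vector (eigenvalue `0`), the difference of the two apex indicators
(eigenvalue `n`), and the vector equal to `n` on the apexes and `-2` on `X` (eigenvalue `n + 2`).
They exist because `(L v) x = ∑_y A x y (v x - v y)` and every vertex of `X` is joined to both
apexes, so `L` maps vectors constant on `X` to vectors constant on `X`.

Writing `n = 2k` and `z = -e^{2it}`, the parity of `k` gives
`(n + 2) U_L(t)_{u,u} = 1 + (k + 1) z^k - k z^(k+1)`. For `z = e^{iw}` the squared modulus of this
polynomial is `4 + 4 ∑_{j<k} (j + 1) (1 - cos w) (1 + cos ((j + 1) w))`, which is at least `4`; for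
`k ≥ 2` the terms `j = 0, 1` vanish together only when `cos w = 1`, that is when `e^{2it} = -1`.
-/

open Complex Matrix

section
attribute [local instance] Matrix.linftyOpNormedRing Matrix.linftyOpNormedAlgebra

theorem Matrix.exp_mulVec_of_mulVec_eq_smul_s13 {𝕂 m : Type*} [RCLike 𝕂] [Fintype m] [DecidableEq m]
    {A : Matrix m m 𝕂} {v : m → 𝕂} {μ : 𝕂} (h : A *ᵥ v = μ • v) :
    NormedSpace.exp A *ᵥ v = NormedSpace.exp μ • v := by
  have hpow (k : ℕ) : A ^ k *ᵥ v = μ ^ k • v := by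
    induction k with
    | zero => simp
    | succ k ih => rw [pow_succ', ← mulVec_mulVec, ih, mulVec_smul, h, smul_smul, pow_succ]
  refine ((NormedSpace.exp_series_hasSum_exp' (𝕂 := 𝕂) A).map (mulVec.addMonoidHomLeft v)
    (continuous_id.matrix_mulVec continuous_const)).unique ?_
  simpa [Function.comp_def, mulVec.addMonoidHomLeft, smul_mulVec, hpow, smul_smul] using
    (NormedSpace.exp_series_hasSum_exp' (𝕂 := 𝕂) μ).smul_const v

end

theorem cos_combination_eq_four_add_four_mul_sum (k : ℕ) (w : ℝ) :
    1 + (k + 1) ^ 2 + k ^ 2 + 2 * (k + 1) * Real.cos (k * w) - 2 * k * Real.cos ((k + 1) * w)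
        - 2 * k * (k + 1) * Real.cos w =
      4 + 4 * ∑ j ∈ Finset.range k, (j + 1) * (1 - Real.cos w) * (1 + Real.cos ((j + 1) * w)) := by
  induction k with
  | zero => norm_num
  | succ k ih =>
    rw [Finset.sum_range_succ]
    push_cast
    have h₁ : Real.cos ((k + 1 + 1) * w) =
        Real.cos ((k + 1) * w) * Real.cos w - Real.sin ((k + 1) * w) * Real.sin w := by
      rw [← Real.cos_add]; ring_nf
    have h₂ : Real.cos (k * w) =
        Real.cos ((k + 1) * w) * Real.cos w + Real.sin ((k + 1) * w) * Real.sin w := by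
      rw [← Real.cos_sub]; ring_nf
    linear_combination ih - 2 * (k + 1) * h₁ - 2 * (k + 1) * h₂

def apexPoly (k : ℕ) (z : ℂ) : ℂ := 1 + (k + 1) * z ^ k - k * z ^ (k + 1)

theorem sq_norm_apexPoly_exp_mul_I (k : ℕ) (w : ℝ) :
    ‖apexPoly k (exp (w * I))‖ ^ 2 =
      4 + 4 * ∑ j ∈ Finset.range k, (j + 1) * (1 - Real.cos w) * (1 + Real.cos ((j + 1) * w)) := by
  rw [← cos_combination_eq_four_add_four_mul_sum, apexPoly, ← exp_nat_mul, ← exp_nat_mul,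
    Complex.sq_norm, normSq_apply]
  have hcross : Real.cos ((k + 1) * w) * Real.cos (k * w) +
      Real.sin ((k + 1) * w) * Real.sin (k * w) = Real.cos w := by
    rw [← Real.cos_sub]; ring_nf
  simp only [Nat.cast_add, Nat.cast_one, sub_re, add_re, one_re, mul_re, natCast_re, exp_re,
    ofReal_re, I_re, mul_zero, ofReal_im, I_im, mul_one, sub_self, natCast_im, mul_im, add_zero,
    zero_mul, Real.exp_zero, one_mul, add_im, one_im, exp_im, sub_zero, sub_im, zero_add]
  linear_combination (k + 1 : ℝ) ^ 2 * Real.sin_sq_add_cos_sq (k * w) +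
    (k : ℝ) ^ 2 * Real.sin_sq_add_cos_sq ((k + 1) * w) - 2 * k * (k + 1) * hcross

theorem two_le_norm_apexPoly_exp_mul_I {k : ℕ} (hk : 2 ≤ k) (w : ℝ) :
    2 ≤ ‖apexPoly k (exp (w * I))‖ ∧ (‖apexPoly k (exp (w * I))‖ = 2 ↔ Real.cos w = 1) := by
  have hsq := sq_norm_apexPoly_exp_mul_I k w
  set S := ∑ j ∈ Finset.range k, ((j : ℝ) + 1) * (1 - Real.cos w) * (1 + Real.cos ((j + 1) * w))
  have hterm : ∀ j ∈ Finset.range k,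
      0 ≤ ((j : ℝ) + 1) * (1 - Real.cos w) * (1 + Real.cos ((j + 1) * w)) := fun j _ =>
    mul_nonneg (mul_nonneg (by positivity) (by linarith [Real.cos_le_one w]))
      (by linarith [Real.neg_one_le_cos ((j + 1) * w)])
  have hS : S = 0 ↔ Real.cos w = 1 := by
    refine ⟨fun h => ?_, fun h => Finset.sum_eq_zero fun j _ => by simp [h]⟩
    have hz := (Finset.sum_eq_zero_iff_of_nonneg hterm).mp h
    have h₀ := hz 0 (by simp; omega)
    have h₁ := hz 1 (by simp; omega)
    rw [show ((1 : ℕ) + 1 : ℝ) * w = 2 * w by norm_num, Real.cos_two_mul] at h₁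
    norm_num at h₀ h₁
    rcases h₀ with h₀ | h₀ <;> rcases h₁ with h₁ | h₁ <;> linarith
  have hnorm := norm_nonneg (apexPoly k (exp (w * I)))
  refine ⟨by nlinarith [Finset.sum_nonneg hterm], ?_⟩
  rw [← hS, ← sq_eq_sq₀ hnorm zero_le_two, hsq]
  constructor <;> intro h <;> linarith

section Laplacian

variable {V α β : Type*} [Fintype V] [DecidableEq V] [Fintype α] [DecidableEq α]
  [Fintype β] [DecidableEq β]

def weightedLaplacian (A : Matrix V V ℝ) : Matrix V V ℂ :=
  (diagonal (fun x => ∑ y, A x y) - A).map ofReal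

theorem weightedLaplacian_mulVec (A : Matrix V V ℝ) (v : V → ℂ) (x : V) :
    (weightedLaplacian A *ᵥ v) x = ∑ y, A x y * (v x - v y) := by
  simp [weightedLaplacian, mulVec, dotProduct, diagonal_apply, sub_mul, mul_sub, apply_ite,
    ite_mul, ← Finset.sum_mul]

variable (α) in
/-- `O_α ∨ X`: the edgeless graph on `α` joined to the weighted graph on `β` with weights `W`. -/
def joinAdj (W : Matrix β β ℝ) : Matrix (α ⊕ β) (α ⊕ β) ℝ :=
  fromBlocks 0 (of fun _ _ => 1) (of fun _ _ => 1) W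

theorem weightedLaplacian_joinAdj_mulVec_elim (W : Matrix β β ℝ) (a : α → ℂ) (c : ℂ) :
    weightedLaplacian (joinAdj α W) *ᵥ Sum.elim a (fun _ => c) =
      Sum.elim (fun j => Fintype.card β * (a j - c)) (fun _ => Fintype.card α * c - ∑ j, a j) := by
  ext (j | y) <;> simp [weightedLaplacian_mulVec, joinAdj, Fintype.sum_sum_type, mul_sub]

theorem exp_smul_weightedLaplacian_joinAdj_mulVec_elim (W : Matrix β β ℝ) (z : ℂ)
    (a : α → ℂ) (c μ : ℂ)
    (ha : Sum.elim (fun j => Fintype.card β * (a j - c))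
        (fun _ : β => Fintype.card α * c - ∑ j, a j) = μ • Sum.elim a (fun _ => c)) :
    NormedSpace.exp (z • weightedLaplacian (joinAdj α W)) *ᵥ Sum.elim a (fun _ => c) =
      exp (z * μ) • Sum.elim a (fun _ => c) := by
  rw [exp_eq_exp_ℂ]
  refine exp_mulVec_of_mulVec_eq_smul_s13 ?_
  rw [smul_mulVec, weightedLaplacian_joinAdj_mulVec_elim, ha, smul_smul]

theorem exp_smul_weightedLaplacian_joinAdj_inl_inl (W : Matrix β β ℝ) (z : ℂ) (i : Fin 2) :
    NormedSpace.exp (z • weightedLaplacian (joinAdj (Fin 2) W)) (.inl i) (.inl i) =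
      1 / (Fintype.card β + 2) + exp (z * Fintype.card β) / 2 +
        Fintype.card β * exp (z * (Fintype.card β + 2)) / (2 * (Fintype.card β + 2)) := by
  set n : ℂ := (Fintype.card β : ℂ)
  have hn : n + 2 ≠ 0 := by simp only [n]; norm_cast
  have h₀ := exp_smul_weightedLaplacian_joinAdj_mulVec_elim W z (fun _ : Fin 2 => 1) 1 0
    (by ext (j | y) <;> simp)
  have h₁ := exp_smul_weightedLaplacian_joinAdj_mulVec_elim W z
    (fun j : Fin 2 => if j = i then 1 else -1) 0 n
    (by ext (j | y) <;> fin_cases i <;> simp [n, Fin.sum_univ_two])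
  have h₂ := exp_smul_weightedLaplacian_joinAdj_mulVec_elim W z (fun _ : Fin 2 => n) (-2) (n + 2)
    (by
      ext (j | y) <;>
      simp only [sub_neg_eq_add, mul_neg, Finset.sum_const, Finset.card_univ, Fintype.card_fin,
        nsmul_eq_mul, Nat.cast_ofNat, Sum.elim_inl, Sum.elim_inr, Pi.smul_apply, smul_eq_mul] <;>
      ring)
  have hsingle : (Pi.single (.inl i) 1 : Fin 2 ⊕ β → ℂ) =
      (1 / (n + 2)) • Sum.elim (fun _ => 1) (fun _ => 1) +
        (1 / 2 : ℂ) • Sum.elim (fun j => if j = i then 1 else -1) (fun _ => 0) +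
        (1 / (2 * (n + 2))) • Sum.elim (fun _ => n) (fun _ => -2) := by
    ext (j | y)
    · by_cases hj : j = i <;>
        simp only [hj, Pi.single_apply, Sum.inl.injEq, one_div, Sum.elim_lam_const_lam_const,
          Pi.add_apply, Pi.smul_apply, smul_eq_mul, mul_one, mul_neg, Sum.elim_inl, ↓reduceIte] <;>
        field_simp <;> ring
    · simp
  have hcol := congrArg
    (fun v => (NormedSpace.exp (z • weightedLaplacian (joinAdj (Fin 2) W)) *ᵥ v) (.inl i)) hsingle
  simp only [mulVec_single_one, col_apply, mulVec_add, mulVec_smul, h₀, h₁, h₂] at hcol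
  rw [hcol]
  simp only [one_div, mul_zero, exp_zero, Sum.elim_lam_const_lam_const, one_smul, Pi.add_apply,
    Pi.smul_apply, smul_eq_mul, mul_one, Sum.elim_inl, ↓reduceIte]
  field_simp

theorem exp_I_mul_smul_weightedLaplacian_joinAdj_inl_inl_eq_apexPoly (W : Matrix β β ℝ) {m : ℕ}
    (hm : Fintype.card β = 4 * m) (t : ℝ) (i : Fin 2) :
    NormedSpace.exp ((I * t) • weightedLaplacian (joinAdj (Fin 2) W)) (.inl i) (.inl i) =
      apexPoly (2 * m) (-exp (2 * t * I)) / (Fintype.card β + 2) := by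
  rw [exp_smul_weightedLaplacian_joinAdj_inl_inl, apexPoly, (even_two_mul m).neg_pow,
    (odd_two_mul_add_one m).neg_pow, ← exp_nat_mul, ← exp_nat_mul, hm]
  have hm2 : (4 * m : ℂ) + 2 ≠ 0 := by norm_cast
  push_cast
  field_simp
  ring_nf

end Laplacian

theorem Real.cos_two_mul_add_pi_eq_one_iff (t : ℝ) :
    Real.cos (2 * t + Real.pi) = 1 ↔ ∃ j : ℤ, Odd j ∧ t = j * Real.pi / 2 := by
  rw [Real.cos_eq_one_iff]
  constructor
  · rintro ⟨j, hj⟩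
    exact ⟨2 * j - 1, ⟨j - 1, by ring⟩, by push_cast; linarith⟩
  · rintro ⟨j, ⟨l, rfl⟩, ht⟩
    exact ⟨l + 1, by rw [ht]; push_cast; ring⟩

theorem stmt_13_general (n : ℕ) (hn : 1 ≤ n) (hn4 : n % 4 = 0)
    (W : Matrix (Fin n) (Fin n) ℝ)
    (Adj : Matrix (Fin 2 ⊕ Fin n) (Fin 2 ⊕ Fin n) ℝ)
    (hAdj : Adj = Matrix.fromBlocks 0
      (Matrix.of fun _ _ => 1) (Matrix.of fun _ _ => 1) W)
    (L : Matrix (Fin 2 ⊕ Fin n) (Fin 2 ⊕ Fin n) ℂ)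
    (hL : L = (Matrix.diagonal (fun x => ∑ y, Adj x y) - Adj).map Complex.ofReal)
    (i : Fin 2) (t : ℝ) :
    2 / ((n : ℝ) + 2) ≤
      ‖(NormedSpace.exp ((Complex.I * t) • L)) (Sum.inl i) (Sum.inl i)‖ ∧
    (‖(NormedSpace.exp ((Complex.I * t) • L)) (Sum.inl i) (Sum.inl i)‖ =
        2 / ((n : ℝ) + 2) ↔ ∃ j : ℤ, Odd j ∧ t = j * Real.pi / 2) := by
  obtain ⟨m, hm⟩ : ∃ m, n = 4 * m := ⟨n / 4, by omega⟩
  have hentry : NormedSpace.exp ((I * t) • L) (.inl i) (.inl i) =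
      apexPoly (2 * m) (-exp (2 * t * I)) / (n + 2) := by
    subst hAdj hL
    have := exp_I_mul_smul_weightedLaplacian_joinAdj_inl_inl_eq_apexPoly W
      (by rw [Fintype.card_fin, hm]) t i
    rwa [Fintype.card_fin] at this
  have hz : -exp (2 * t * I) = exp ((2 * t + Real.pi : ℝ) * I) := by
    rw [ofReal_add, add_mul, exp_add, exp_pi_mul_I]; push_cast; ring
  have hnorm : ‖(n : ℂ) + 2‖ = n + 2 := by exact_mod_cast norm_natCast (n + 2)
  have hn2 : (0 : ℝ) < n + 2 := by positivity
  obtain ⟨hle, heq⟩ := two_le_norm_apexPoly_exp_mul_I (k := 2 * m) (by omega) (2 * t + Real.pi)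
  rw [hentry, norm_div, hnorm, hz, div_le_div_iff_of_pos_right hn2, div_left_inj' hn2.ne', heq,
    Real.cos_two_mul_add_pi_eq_one_iff]
  exact ⟨hle, Iff.rfl⟩

/-- Let `u` be an apex of `O₂ ∨ X` where `X` is simple positively weighted on `n`
vertices with `n ≡ 0 (mod 4)`. Then `|U_L(t)_{u,u}| ≥ 2/(n+2)` for all `t`, with
equality iff `t = jπ/2` for an odd integer `j`. -/
theorem stmt_13 (n : ℕ) (hn : 1 ≤ n) (hn4 : n % 4 = 0)
    (W : Matrix (Fin n) (Fin n) ℝ) (hWs : W.IsSymm)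
    (hW0 : ∀ i, W i i = 0) (hWpos : ∀ i j, 0 ≤ W i j)
    (Adj : Matrix (Fin 2 ⊕ Fin n) (Fin 2 ⊕ Fin n) ℝ)
    (hAdj : Adj = Matrix.fromBlocks 0
      (Matrix.of fun _ _ => 1) (Matrix.of fun _ _ => 1) W)
    (L : Matrix (Fin 2 ⊕ Fin n) (Fin 2 ⊕ Fin n) ℂ)
    (hL : L = (Matrix.diagonal (fun x => ∑ y, Adj x y) - Adj).map Complex.ofReal)
    (i : Fin 2) (t : ℝ) :
    2 / ((n : ℝ) + 2) ≤
      ‖(NormedSpace.exp ((Complex.I * t) • L)) (Sum.inl i) (Sum.inl i)‖ ∧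
    (‖(NormedSpace.exp ((Complex.I * t) • L)) (Sum.inl i) (Sum.inl i)‖ =
        2 / ((n : ℝ) + 2) ↔ ∃ j : ℤ, Odd j ∧ t = j * Real.pi / 2) :=
  stmt_13_general n hn hn4 W Adj hAdj L hL i t
end

section
/- Let w be the central vertex of K_{1,n} with n ≥ 2 and L the Laplacian. Then |U_L(t)_{w,w}| ≥ 1 − 2/(n+1) for all t, with equality if and only if t = jπ/(n+1) for some odd j. -/
/-!
The Laplacian of `K_{1,n}` has eigenvalues `0`, `1`, `n + 1`. Its eigenprojections are `Q₀`
(onto the constant vector), `Q₂` (onto `(n, -1, …, -1)`) and `P = 1 - Q₀ - Q₂`, and `P` vanishes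
at the centre. So `U_L(t) = Q₀ + e^{it} P + e^{it(n+1)} Q₂` has centre entry
`(1 + n e^{iθ}) / (n + 1)` with `θ = t (n + 1)`. Since `|1 + n e^{iθ}|² = (n - 1)² + 2n (1 + cos θ)`,
the modulus is at least `(n - 1) / (n + 1)`, with equality exactly when `cos θ = -1`.
-/

open Matrix NormedSpace

section Idempotent

variable {𝕂 𝔸 : Type*} [RCLike 𝕂] [NormedRing 𝔸] [NormedAlgebra 𝕂 𝔸] {P Q : 𝔸}

theorem IsIdempotentElem.smul_pow_eq (hQ : IsIdempotentElem Q) (c : 𝕂) (k : ℕ) :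
    (c • Q) ^ k = c ^ k • Q + (0 : 𝕂) ^ k • (1 - Q) := by
  cases k with
  | zero => simp
  | succ k => simp only [smul_pow, hQ.pow_succ_eq, zero_pow k.succ_ne_zero, zero_smul, add_zero]

variable [CompleteSpace 𝔸]

theorem IsIdempotentElem.exp_smul_s16 (hQ : IsIdempotentElem Q) (c : 𝕂) :
    exp (c • Q) = exp c • Q + (1 - Q) := by
  have hsum (x : 𝕂) : HasSum (fun k : ℕ => (k.factorial⁻¹ : 𝕂) • x ^ k) (exp x) :=
    exp_series_hasSum_exp' x
  have h := ((hsum c).smul_const Q).add ((hsum 0).smul_const (1 - Q))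
  rw [NormedSpace.exp_zero, one_smul] at h
  refine (exp_series_hasSum_exp' (𝕂 := 𝕂) (c • Q)).unique ?_
  convert h using 2 with k
  simp only [hQ.smul_pow_eq, smul_add, smul_smul, smul_eq_mul]

theorem IsIdempotentElem.exp_smul_add_smul (hP : IsIdempotentElem P) (hQ : IsIdempotentElem Q)
    (hPQ : P * Q = 0) (hQP : Q * P = 0) (a b : 𝕂) :
    exp (a • P + b • Q) = (1 - P - Q) + exp a • P + exp b • Q := by
  have hcomm : Commute (a • P) (b • Q) :=
    ((show Commute P Q from hPQ.trans hQP.symm).smul_left a).smul_right b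
  let _ : NormedAlgebra ℚ 𝔸 := NormedAlgebra.restrictScalars ℚ 𝕂 𝔸
  rw [NormedSpace.exp_add_of_commute hcomm, hP.exp_smul_s16, hQ.exp_smul_s16]
  simp only [mul_add, add_mul, mul_sub, sub_mul, smul_mul_assoc, mul_smul_comm,
    hPQ, mul_one, one_mul, smul_zero, sub_zero, zero_add]
  abel

end Idempotent

namespace Matrix

variable {m : Type*} [Fintype m]

theorem exp_smul_add_smul_of_isIdempotentElem [DecidableEq m] {P Q : Matrix m m ℂ}
    (hP : IsIdempotentElem P) (hQ : IsIdempotentElem Q) (hPQ : P * Q = 0) (hQP : Q * P = 0)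
    (a b : ℂ) :
    exp (a • P + b • Q) = (1 - P - Q) + Complex.exp a • P + Complex.exp b • Q := by
  simp only [Complex.exp_eq_exp_ℂ]
  open scoped Norms.Operator in exact hP.exp_smul_add_smul hQ hPQ hQP a b

noncomputable def lineProj {𝕜 : Type*} [Field 𝕜] (x : m → 𝕜) : Matrix m m 𝕜 :=
  (x ⬝ᵥ x)⁻¹ • vecMulVec x x

variable {𝕜 : Type*} [Field 𝕜]

theorem lineProj_apply (x : m → 𝕜) (i j : m) :
    lineProj x i j = x i * x j / (x ⬝ᵥ x) := by
  simp [lineProj, vecMulVec_apply, div_eq_inv_mul]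

theorem lineProj_mul_lineProj {x y : m → 𝕜} (h : x ⬝ᵥ y = 0) :
    lineProj x * lineProj y = 0 := by
  simp [lineProj, vecMulVec_mul_vecMulVec, h]

theorem isIdempotentElem_lineProj {x : m → 𝕜} (hx : x ⬝ᵥ x ≠ 0) :
    IsIdempotentElem (lineProj x) := by
  simp [IsIdempotentElem, lineProj, vecMulVec_mul_vecMulVec, smul_smul, hx]

end Matrix

namespace StarGraph

variable (n : ℕ)

def adj : Matrix (Unit ⊕ Fin n) (Unit ⊕ Fin n) ℝ :=
  fromBlocks 0 (of fun _ _ => 1) (of fun _ _ => 1) 0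

noncomputable def laplacian : Matrix (Unit ⊕ Fin n) (Unit ⊕ Fin n) ℂ :=
  (diagonal (fun x => ∑ y, adj n x y) - adj n).map Complex.ofReal

def centerVec : Unit ⊕ Fin n → ℂ :=
  Sum.elim (fun _ => n) (fun _ => -1)

theorem one_dotProduct_one : (1 : Unit ⊕ Fin n → ℂ) ⬝ᵥ 1 = n + 1 := by
  simp [dotProduct, add_comm]

theorem one_dotProduct_centerVec : 1 ⬝ᵥ centerVec n = 0 := by
  simp [dotProduct, centerVec]

theorem centerVec_dotProduct_self : centerVec n ⬝ᵥ centerVec n = n * (n + 1) := by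
  simp [dotProduct, centerVec]
  ring

theorem laplacian_eq (hn : n ≠ 0) :
    laplacian n = (1 - lineProj 1 - lineProj (centerVec n)) +
      ((n : ℂ) + 1) • lineProj (centerVec n) := by
  have : (n : ℂ) + 1 ≠ 0 := by exact_mod_cast n.succ_ne_zero
  have : (n : ℂ) ≠ 0 := by exact_mod_cast hn
  ext (_ | i) (_ | j)
  all_goals
    simp only [Matrix.add_apply, Matrix.sub_apply, Matrix.smul_apply, lineProj_apply,
      one_dotProduct_one, centerVec_dotProduct_self]
    simp [laplacian, adj, centerVec, one_apply, diagonal_apply, Fintype.sum_sum_type,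
      apply_ite Complex.ofReal]
    field_simp
    ring

theorem exp_smul_laplacian (hn : n ≠ 0) (s : ℂ) :
    exp (s • laplacian n) =
      lineProj 1 + Complex.exp s • (1 - lineProj 1 - lineProj (centerVec n)) +
        Complex.exp (s * (n + 1)) • lineProj (centerVec n) := by
  have hn1 : (n : ℂ) + 1 ≠ 0 := by exact_mod_cast n.succ_ne_zero
  have hQ₀ : IsIdempotentElem (lineProj (1 : Unit ⊕ Fin n → ℂ)) :=
    isIdempotentElem_lineProj (by rw [one_dotProduct_one]; exact hn1)
  have hQ₂ : IsIdempotentElem (lineProj (centerVec n)) :=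
    isIdempotentElem_lineProj <| by
      rw [centerVec_dotProduct_self]; exact mul_ne_zero (by exact_mod_cast hn) hn1
  have h₀₂ := lineProj_mul_lineProj (one_dotProduct_centerVec n)
  have h₂₀ := lineProj_mul_lineProj ((dotProduct_comm _ _).trans (one_dotProduct_centerVec n))
  have hP : IsIdempotentElem (1 - lineProj 1 - lineProj (centerVec n)) := by
    rw [sub_sub]
    exact (hQ₀.add hQ₂ (by rw [h₀₂, h₂₀, add_zero])).one_sub
  rw [laplacian_eq n hn, smul_add, smul_smul, exp_smul_add_smul_of_isIdempotentElem hP hQ₂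
    (by simp [sub_mul, h₀₂, hQ₂.eq]) (by simp [mul_sub, h₂₀, hQ₂.eq])]
  abel

theorem exp_smul_laplacian_apply_center (hn : n ≠ 0) (s : ℂ) :
    exp (s • laplacian n) (.inl ()) (.inl ()) =
      (1 + n * Complex.exp (s * (n + 1))) / (n + 1) := by
  have : (n : ℂ) + 1 ≠ 0 := by exact_mod_cast n.succ_ne_zero
  have : (n : ℂ) ≠ 0 := by exact_mod_cast hn
  simp only [exp_smul_laplacian n hn, Matrix.add_apply, Matrix.sub_apply, Matrix.smul_apply,
    lineProj_apply, one_dotProduct_one, centerVec_dotProduct_self]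
  simp [centerVec]
  field_simp
  ring

end StarGraph

namespace Complex

theorem norm_one_add_mul_exp_mul_I_sq (r θ : ℝ) :
    ‖1 + r * exp (θ * I)‖ ^ 2 = (r - 1) ^ 2 + 2 * r * (1 + Real.cos θ) := by
  rw [Complex.sq_norm, normSq_apply]
  simp [exp_ofReal_mul_I_re, exp_ofReal_mul_I_im]
  linear_combination r ^ 2 * Real.sin_sq_add_cos_sq θ

theorem sub_one_le_norm_one_add_mul_exp_mul_I {r : ℝ} (hr : 0 ≤ r) (θ : ℝ) :
    r - 1 ≤ ‖1 + r * exp (θ * I)‖ := by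
  refine (le_abs_self _).trans (abs_le_of_sq_le_sq ?_ (norm_nonneg _))
  rw [norm_one_add_mul_exp_mul_I_sq]
  nlinarith [Real.neg_one_le_cos θ]

theorem norm_one_add_mul_exp_mul_I_eq_sub_one_iff {r : ℝ} (hr : 1 ≤ r) (θ : ℝ) :
    ‖1 + r * exp (θ * I)‖ = r - 1 ↔ Real.cos θ = -1 := by
  rw [← pow_left_inj₀ (norm_nonneg _) (by linarith) two_ne_zero, norm_one_add_mul_exp_mul_I_sq,
    add_eq_left, mul_eq_zero, or_iff_right (by positivity), add_eq_zero_iff_neg_eq, eq_comm]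

end Complex

theorem Real.cos_eq_neg_one_iff_exists_odd_mul_pi (x : ℝ) :
    Real.cos x = -1 ↔ ∃ j : ℤ, Odd j ∧ x = j * Real.pi := by
  rw [Real.cos_eq_neg_one_iff]
  constructor
  · rintro ⟨k, rfl⟩
    exact ⟨2 * k + 1, odd_two_mul_add_one k, by push_cast; ring⟩
  · rintro ⟨j, ⟨k, rfl⟩, rfl⟩
    exact ⟨k, by push_cast; ring⟩

/-- For the central vertex `w` of `K_{1,n}` (`n ≥ 2`) with Laplacian `L`,
`|U_L(t)_{w,w}| ≥ 1 − 2/(n+1)` for all `t`, with equality iff `t = jπ/(n+1)`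
for some odd `j`. -/
theorem stmt_16 (n : ℕ) (hn : 2 ≤ n)
    (Adj : Matrix (Unit ⊕ Fin n) (Unit ⊕ Fin n) ℝ)
    (hAdj : Adj = Matrix.fromBlocks 0
      (Matrix.of fun _ _ => 1) (Matrix.of fun _ _ => 1) 0)
    (L : Matrix (Unit ⊕ Fin n) (Unit ⊕ Fin n) ℂ)
    (hL : L = (Matrix.diagonal (fun x => ∑ y, Adj x y) - Adj).map Complex.ofReal)
    (t : ℝ) :
    1 - 2 / ((n : ℝ) + 1) ≤
      ‖(NormedSpace.exp ((Complex.I * t) • L)) (Sum.inl ()) (Sum.inl ())‖ ∧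
    (‖(NormedSpace.exp ((Complex.I * t) • L)) (Sum.inl ()) (Sum.inl ())‖ =
        1 - 2 / ((n : ℝ) + 1) ↔
      ∃ j : ℤ, Odd j ∧ t = j * Real.pi / ((n : ℝ) + 1)) := by
  have hL' : L = StarGraph.laplacian n := by rw [hL, hAdj]; rfl
  have hpos : (0 : ℝ) < n + 1 := by positivity
  have hentry : ‖(NormedSpace.exp ((Complex.I * t) • L)) (Sum.inl ()) (Sum.inl ())‖ =
      ‖1 + (n : ℝ) * Complex.exp ((t * (n + 1) : ℝ) * Complex.I)‖ / (n + 1) := by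
    rw [hL', StarGraph.exp_smul_laplacian_apply_center n (by omega), norm_div]
    congr 1
    · push_cast
      ring_nf
    · exact_mod_cast Complex.norm_natCast (n + 1)
  have hbound : 1 - 2 / ((n : ℝ) + 1) = (n - 1) / (n + 1) := by
    field_simp
    ring
  rw [hentry, hbound, div_left_inj' hpos.ne',
    Complex.norm_one_add_mul_exp_mul_I_eq_sub_one_iff (by exact_mod_cast (by omega : 1 ≤ n)),
    Real.cos_eq_neg_one_iff_exists_odd_mul_pi]
  constructor
  · exact div_le_div_of_nonneg_right
      (Complex.sub_one_le_norm_one_add_mul_exp_mul_I n.cast_nonneg _) hpos.le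
  · exact exists_congr fun j => and_congr_right fun _ => (eq_div_iff hpos.ne').symm
end
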